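/- Let A and V be d×d symmetric positive definite matrices, θ ∈ [0,1], h > 0, b ∈ ℝ^d; set B = V^{1/2}AV^{1/2} and W = I + (θ−½)(h/2)B, and assume I + (θh/2)B and W are invertible. (1) If x, y ∈ ℝ^d and ξ ∈ ℝ^d satisfy (I + (θh/2)VA)y = (I − ((1−θ)h/2)VA)x + (h/2)Vb + (hV)^{1/2}·V^{−1/2}·h^{−1/2}·(hV)^{1/2}ξ — equivalently y is the general Langevin proposal y = (I + (θh/2)VA)⁻¹[(I − ((1−θ)h/2)VA)x + (h/2)Vb + (hV)^{1/2}ξ] — then x̃ = V^{−1/2}x and ỹ = V^{−1/2}y satisfy (I + (θh/2)B)ỹ = (I − ((1−θ)h/2)B)x̃ + (h/2)V^{1/2}b + h^{1/2}ξ. (2) The transformed proposal corresponds to the matrix splitting with M = (2/h)W(I + (θh/2)B), N = (2/h)W(I − ((1−θ)h/2)B), 𝒜 = WB, β = WV^{1/2}b; in particular M − N = WB, M⁻¹N = (I + (θh/2)B)⁻¹(I − ((1−θ)h/2)B), M⁻¹β = (h/2)(I + (θh/2)B)⁻¹V^{1/2}b, and M⁻¹(Mᵀ+N)M⁻ᵀ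 = h(I + (θh/2)B)⁻². -/

import Mathlib

open Matrix
/-- The old Mathlib `Matrix.PosSemidef.sqrt` (removed upstream), with its original definition. -/
noncomputable def Matrix.PosSemidef.sqrt {n : Type*} [Fintype n] [DecidableEq n]
    {A : Matrix n n ℝ} (hA : A.PosSemidef) : Matrix n n ℝ :=
  hA.1.eigenvectorUnitary.1 * diagonal ((↑) ∘ (fun x => √x) ∘ hA.1.eigenvalues) *
    (star hA.1.eigenvectorUnitary : Matrix n n ℝ)

/-
With `S = V^{1/2}` one has `S⁻¹ (S S A) = (S A S) S⁻¹`, so multiplying the proposal equation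
by `S⁻¹` turns every `VA` into `B = S A S` and `V b` into `S b`. For the splitting, write
`P = I + (θh/2)B` and `Q = I - ((1-θ)h/2)B`: together with `W` these are polynomials in the
symmetric matrix `B`, hence symmetric and pairwise commuting, and `P + Q = 2W`. Thus
`M = (2/h)WP` is symmetric with `M⁻¹ = (h/2)P⁻¹W⁻¹`, and `Mᵀ + N = (4/h)W²`, so all factors
of `W` cancel in `M⁻¹(Mᵀ + N)M⁻ᵀ`.
-/

namespace Matrix

variable {n : Type*} [Fintype n] [DecidableEq n]

lemma PosSemidef.sqrt_mul_self {A : Matrix n n ℝ} (hA : A.PosSemidef) :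
    hA.sqrt * hA.sqrt = A := by
  set U : Matrix n n ℝ := (hA.1.eigenvectorUnitary : Matrix n n ℝ)
  have hUU : (star U) * U = 1 := Unitary.star_mul_self_of_mem hA.1.eigenvectorUnitary.2
  have hD : diagonal ((↑) ∘ (fun x => √x) ∘ hA.1.eigenvalues) *
      diagonal ((↑) ∘ (fun x => √x) ∘ hA.1.eigenvalues)
      = diagonal (RCLike.ofReal ∘ hA.1.eigenvalues : n → ℝ) := by
    rw [diagonal_mul_diagonal]
    congr 1 with i
    simp [Real.mul_self_sqrt (hA.eigenvalues_nonneg i)]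
  have hspec := hA.1.spectral_theorem
  rw [Unitary.conjStarAlgAut_apply] at hspec
  conv_rhs => rw [hspec, ← hD]
  simp only [PosSemidef.sqrt, Matrix.mul_assoc]
  rw [← Matrix.mul_assoc (star U) U, hUU, Matrix.one_mul]

lemma PosSemidef.transpose_sqrt {A : Matrix n n ℝ} (hA : A.PosSemidef) :
    hA.sqrtᵀ = hA.sqrt := by
  simp only [PosSemidef.sqrt, transpose_mul, diagonal_transpose, Matrix.mul_assoc]
  rfl

lemma PosDef.isUnit_det_sqrt {A : Matrix n n ℝ} (hA : A.PosDef) :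
    IsUnit hA.posSemidef.sqrt.det := by
  have hdet : 0 < A.det := hA.det_pos
  rw [← hA.posSemidef.sqrt_mul_self, det_mul] at hdet
  exact isUnit_iff_ne_zero.mpr fun h0 => by simp [h0] at hdet

section ChangeOfVariables

variable {S A : Matrix n n ℝ}

lemma nonsing_inv_mul_one_add_smul_sq_mul (hS : IsUnit S.det) (a : ℝ) :
    S⁻¹ * (1 + a • (S * S * A)) = (1 + a • (S * A * S)) * S⁻¹ := by
  rw [mul_add, add_mul, Matrix.mul_one, Matrix.one_mul, Matrix.mul_smul, Matrix.smul_mul,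
    Matrix.mul_assoc S, nonsing_inv_mul_cancel_left _ _ hS, mul_nonsing_inv_cancel_right _ _ hS]

lemma nonsing_inv_mul_one_sub_smul_sq_mul (hS : IsUnit S.det) (a : ℝ) :
    S⁻¹ * (1 - a • (S * S * A)) = (1 - a • (S * A * S)) * S⁻¹ := by
  simpa only [sub_eq_add_neg, neg_smul] using nonsing_inv_mul_one_add_smul_sq_mul hS (-a)

lemma det_one_add_smul_sq_mul (hS : IsUnit S.det) (a : ℝ) :
    (1 + a • (S * S * A)).det = (1 + a • (S * A * S)).det := by
  rw [← det_conj ((isUnit_iff_isUnit_det S).mpr hS) (1 + a • (S * A * S)),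
    Matrix.mul_assoc S _ S⁻¹, ← nonsing_inv_mul_one_add_smul_sq_mul hS,
    mul_nonsing_inv_cancel_left _ _ hS]

lemma langevin_change_of_variables (hS : IsUnit S.det) {a a' u s : ℝ}
    {x y ξ b : n → ℝ}
    (hy : (1 + a • (S * S * A)) *ᵥ y
      = (1 - a' • (S * S * A)) *ᵥ x + u • ((S * S) *ᵥ b) + s • (S *ᵥ ξ)) :
    (1 + a • (S * A * S)) *ᵥ (S⁻¹ *ᵥ y)
      = (1 - a' • (S * A * S)) *ᵥ (S⁻¹ *ᵥ x) + u • (S *ᵥ b) + s • ξ := by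
  have h := congrArg (S⁻¹ *ᵥ ·) hy
  simp only [mulVec_add, mulVec_smul, mulVec_mulVec, nonsing_inv_mul_one_add_smul_sq_mul hS,
    nonsing_inv_mul_one_sub_smul_sq_mul hS, nonsing_inv_mul_cancel_left _ _ hS,
    nonsing_inv_mul _ hS, one_mulVec] at h
  simpa only [← mulVec_mulVec] using h

end ChangeOfVariables

section Splitting

variable {W P Q : Matrix n n ℝ} {c : ℝ}

lemma inv_smul_mul (hc : c ≠ 0) (hW : IsUnit W.det) (hP : IsUnit P.det) :
    (c • (W * P))⁻¹ = c⁻¹ • (P⁻¹ * W⁻¹) :=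
  inv_eq_left_inv <| by
    rw [smul_mul_smul_comm, inv_mul_cancel₀ hc, one_smul, Matrix.mul_assoc,
      nonsing_inv_mul_cancel_left _ _ hW, nonsing_inv_mul _ hP]

lemma isUnit_det_smul_mul (hc : c ≠ 0) (hW : IsUnit W.det) (hP : IsUnit P.det) :
    IsUnit (c • (W * P)).det := by
  rw [det_smul, det_mul]
  exact ((isUnit_iff_ne_zero.mpr hc).pow _).mul (hW.mul hP)

lemma inv_smul_mul_mul_smul_mul (hc : c ≠ 0) (hW : IsUnit W.det) (hP : IsUnit P.det) :
    (c • (W * P))⁻¹ * (c • (W * Q)) = P⁻¹ * Q := by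
  rw [inv_smul_mul hc hW hP, smul_mul_smul_comm, inv_mul_cancel₀ hc, one_smul, Matrix.mul_assoc,
    nonsing_inv_mul_cancel_left _ _ hW]

lemma inv_smul_mul_mulVec_mul_mulVec (hc : c ≠ 0) (hW : IsUnit W.det) (hP : IsUnit P.det)
    (S : Matrix n n ℝ) (b : n → ℝ) :
    (c • (W * P))⁻¹ *ᵥ ((W * S) *ᵥ b) = c⁻¹ • (P⁻¹ *ᵥ (S *ᵥ b)) := by
  rw [inv_smul_mul hc hW hP, mulVec_mulVec, Matrix.smul_mul, Matrix.mul_assoc,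
    nonsing_inv_mul_cancel_left _ _ hW, smul_mulVec, mulVec_mulVec]

lemma inv_smul_mul_mul_transpose_add_mul_inv_transpose (hc : c ≠ 0) (hW : IsUnit W.det)
    (hP : IsUnit P.det) (hWt : Wᵀ = W) (hPt : Pᵀ = P) (hWP : Commute W P) {k : ℝ}
    (hPQ : P + Q = k • W) :
    (c • (W * P))⁻¹ * ((c • (W * P))ᵀ + c • (W * Q)) * (c • (W * P))⁻¹ᵀ
      = (k / c) • (P⁻¹ * P⁻¹) := by
  have hsum : (c • (W * P))ᵀ + c • (W * Q) = (c * k) • (W * W) := by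
    rw [transpose_smul, transpose_mul, hWt, hPt, ← hWP.eq, ← smul_add, ← mul_add, hPQ,
      Matrix.mul_smul, smul_smul]
  have hcancel : P⁻¹ * W⁻¹ * (W * W) * (W⁻¹ * P⁻¹) = P⁻¹ * P⁻¹ := by
    simp only [Matrix.mul_assoc, nonsing_inv_mul_cancel_left _ _ hW,
      mul_nonsing_inv_cancel_left _ _ hW]
  rw [hsum, inv_smul_mul hc hW hP, transpose_smul, transpose_mul, transpose_nonsing_inv,
    transpose_nonsing_inv, hWt, hPt, smul_mul_smul_comm, smul_mul_smul_comm, hcancel]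
  congr 1
  field_simp

end Splitting

lemma commute_one_add_smul_one_add_smul (B : Matrix n n ℝ) (a a' : ℝ) :
    Commute (1 + a • B) (1 + a' • B) :=
  (Commute.one_left _).add_left <|
    (Commute.one_right _).add_right (((Commute.refl B).smul_left a).smul_right a')

end Matrix

theorem general_langevin_transformed_splitting_general
    {d : ℕ} (A V : Matrix (Fin d) (Fin d) ℝ) (hA : A.PosDef) (hV : V.PosDef)
    (θ h : ℝ) (hh : 0 < h) (b : Fin d → ℝ) :
    (let sqrtV : Matrix (Fin d) (Fin d) ℝ := Matrix.PosSemidef.sqrt hV.posSemidef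
     let B : Matrix (Fin d) (Fin d) ℝ := sqrtV * A * sqrtV
     let W : Matrix (Fin d) (Fin d) ℝ := 1 + ((θ - 1/2) * (h/2)) • B
     ∀ _ : IsUnit (1 + (θ * h / 2) • B).det,
     ∀ _ : IsUnit W.det,
     ((∀ x y ξ : Fin d → ℝ,
        y = (1 + (θ * h / 2) • (V * A))⁻¹ *ᵥ
              ((1 - ((1 - θ) * h / 2) • (V * A)) *ᵥ x + (h / 2) • (V *ᵥ b)
                + Real.sqrt h • (sqrtV *ᵥ ξ)) →
        (1 + (θ * h / 2) • B) *ᵥ (sqrtV⁻¹ *ᵥ y)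
          = (1 - ((1 - θ) * h / 2) • B) *ᵥ (sqrtV⁻¹ *ᵥ x)
            + (h / 2) • (sqrtV *ᵥ b) + Real.sqrt h • ξ) ∧
      (let M : Matrix (Fin d) (Fin d) ℝ := (2 / h) • (W * (1 + (θ * h / 2) • B))
       let N : Matrix (Fin d) (Fin d) ℝ := (2 / h) • (W * (1 - ((1 - θ) * h / 2) • B))
       let β : Fin d → ℝ := (W * sqrtV) *ᵥ b
       M - N = W * B ∧
       IsUnit M.det ∧
       M⁻¹ * N = (1 + (θ * h / 2) • B)⁻¹ * (1 - ((1 - θ) * h / 2) • B) ∧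
       M⁻¹ *ᵥ β = (h / 2) • ((1 + (θ * h / 2) • B)⁻¹ *ᵥ (sqrtV *ᵥ b)) ∧
       M⁻¹ * (Mᵀ + N) * M⁻¹ᵀ = h • ((1 + (θ * h / 2) • B)⁻¹ * (1 + (θ * h / 2) • B)⁻¹)))) := by
  intro S B W hP hW
  have hSS : S * S = V := hV.posSemidef.sqrt_mul_self
  have hS : IsUnit S.det := hV.isUnit_det_sqrt
  have hSt : Sᵀ = S := hV.posSemidef.transpose_sqrt
  have hAt : Aᵀ = A := (isHermitian_iff_isSymm.mp hA.isHermitian).eq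
  have hB : Bᵀ = B := by simp only [B, transpose_mul, hSt, hAt, Matrix.mul_assoc]
  refine ⟨fun x y ξ hy => ?_, ?_⟩
  · rw [← hSS] at hy
    have hK : IsUnit (1 + (θ * h / 2) • (S * S * A)).det := by
      rwa [det_one_add_smul_sq_mul hS]
    refine langevin_change_of_variables hS ?_
    rw [hy, mulVec_mulVec, mul_nonsing_inv _ hK, one_mulVec]
  · intro M N β
    have hc : 2 / h ≠ 0 := by positivity
    have hdiff : (2 / h) • ((1 + (θ * h / 2) • B) - (1 - ((1 - θ) * h / 2) • B)) = B := by
      rw [show (1 + (θ * h / 2) • B) - (1 - ((1 - θ) * h / 2) • B) = (h / 2) • B by module,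
        smul_smul, div_mul_div_cancel₀' two_ne_zero, div_self hh.ne', one_smul]
    have hsum : (1 + (θ * h / 2) • B) + (1 - ((1 - θ) * h / 2) • B) = (2 : ℝ) • W := by
      simp only [W]; module
    refine ⟨?_, isUnit_det_smul_mul hc hW hP, inv_smul_mul_mul_smul_mul hc hW hP, ?_, ?_⟩
    · rw [← smul_sub, ← mul_sub, ← Matrix.mul_smul, hdiff]
    · rw [inv_smul_mul_mulVec_mul_mulVec hc hW hP, inv_div]
    · rw [inv_smul_mul_mul_transpose_add_mul_inv_transpose hc hW hP (by simp [W, hB])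
        (by simp [hB]) (commute_one_add_smul_one_add_smul B _ _) hsum, div_div_eq_mul_div,
        mul_div_cancel_left₀ _ two_ne_zero]

/-- (Lemma: change of coordinates for the general Langevin proposal.)
(1) If `y` is the general Langevin proposal from `x` with noise `ξ`, then
`x̃ = V^{-1/2}x`, `ỹ = V^{-1/2}y` satisfy
`(I + (θh/2)B)ỹ = (I - ((1-θ)h/2)B)x̃ + (h/2)V^{1/2}b + h^{1/2}ξ` with
`B = V^{1/2}AV^{1/2}`.  (2) The transformed proposal corresponds to the matrix
splitting `M = (2/h)W(I + (θh/2)B)`, `N = (2/h)W(I - ((1-θ)h/2)B)`, `𝒜 = WB`,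
`β = WV^{1/2}b`, with the stated identities. -/
theorem general_langevin_transformed_splitting
    {d : ℕ} (A V : Matrix (Fin d) (Fin d) ℝ) (hA : A.PosDef) (hV : V.PosDef)
    (θ h : ℝ) (hθ : θ ∈ Set.Icc (0 : ℝ) 1) (hh : 0 < h) (b : Fin d → ℝ) :
    (let sqrtV : Matrix (Fin d) (Fin d) ℝ := Matrix.PosSemidef.sqrt hV.posSemidef
     let B : Matrix (Fin d) (Fin d) ℝ := sqrtV * A * sqrtV
     let W : Matrix (Fin d) (Fin d) ℝ := 1 + ((θ - 1/2) * (h/2)) • B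
     ∀ _ : IsUnit (1 + (θ * h / 2) • B).det,
     ∀ _ : IsUnit W.det,
     ((∀ x y ξ : Fin d → ℝ,
        y = (1 + (θ * h / 2) • (V * A))⁻¹ *ᵥ
              ((1 - ((1 - θ) * h / 2) • (V * A)) *ᵥ x + (h / 2) • (V *ᵥ b)
                + Real.sqrt h • (sqrtV *ᵥ ξ)) →
        (1 + (θ * h / 2) • B) *ᵥ (sqrtV⁻¹ *ᵥ y)
          = (1 - ((1 - θ) * h / 2) • B) *ᵥ (sqrtV⁻¹ *ᵥ x)
            + (h / 2) • (sqrtV *ᵥ b) + Real.sqrt h • ξ) ∧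
      (let M : Matrix (Fin d) (Fin d) ℝ := (2 / h) • (W * (1 + (θ * h / 2) • B))
       let N : Matrix (Fin d) (Fin d) ℝ := (2 / h) • (W * (1 - ((1 - θ) * h / 2) • B))
       let β : Fin d → ℝ := (W * sqrtV) *ᵥ b
       M - N = W * B ∧
       IsUnit M.det ∧
       M⁻¹ * N = (1 + (θ * h / 2) • B)⁻¹ * (1 - ((1 - θ) * h / 2) • B) ∧
       M⁻¹ *ᵥ β = (h / 2) • ((1 + (θ * h / 2) • B)⁻¹ *ᵥ (sqrtV *ᵥ b)) ∧
       M⁻¹ * (Mᵀ + N) * M⁻¹ᵀ = h • ((1 + (θ * h / 2) • B)⁻¹ * (1 + (θ * h / 2) • B)⁻¹)))) :=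
  general_langevin_transformed_splitting_general A V hA hV θ h hh b
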